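/- Let u_λ be the maximal solution of the shifted Chern-Simons equation Δu = λe^{ū₀+u}(e^{ū₀+u}−1) + 4πN/|V| on a finite connected graph, for λ > λ_c. Then for λ ≥ 16πNη (with η = max_x 1/μ(x)): −ū₀ + ln((1+√(1−16πNη/λ))/2) ≤ u_λ < −ū₀ on V; hence u_λ → −ū₀ as λ → ∞, and for every φ:V→ℝ, ∫_V λe^{ū₀+u_λ}(e^{ū₀+u_λ}−1)φ dμ → −4πΣ_{j=1}^N φ(p_j) as λ → ∞. -/

import Mathlib

open Real Filter

noncomputable def graphLap {V : Type*} [Fintype V] (w : V → V → ℝ) (μ : V → ℝ)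
    (u : V → ℝ) (x : V) : ℝ :=
  (μ x)⁻¹ * ∑ y, w x y * (u y - u x)

def graphConnected {V : Type*} (w : V → V → ℝ) : Prop :=
  ∀ x y : V, Relation.ReflTransGen (fun a b => 0 < w a b) x y

noncomputable def dirac {V : Type*} [DecidableEq V] (μ : V → ℝ) (p x : V) : ℝ :=
  if x = p then (μ x)⁻¹ else 0

/-!
With `v = ū₀ + u_λ` the equation becomes `Δv = λ e^v (e^v - 1) + 4π Σ δ_{p_j}`. At a maximum of
`v` with `v ≥ 0` the right side is `≥ 0 ≥ Δv`; the strong maximum principle and connectedness then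
force `v` to be constant, which the Dirac mass at `p₁` rules out, so `v < 0`. For the lower bound,
`-ū₀ + ln t` with `λ t (t - 1) = -4πNη` is a subsolution and `-ū₀` a supersolution; since
`t ↦ λ e^t (e^t - 1) - 2λ t` is antitone on `t ≤ 0`, inverting `Δ - 2λ` gives a monotone map of
the order interval between them, whose fixed point is a solution, hence lies below the maximal one.
Both bounds tend to `-ū₀`; finally `λ e^v (e^v - 1) = Δv - 4π Σ δ_{p_j}` with `Δv → 0`.
-/

open Set Topology

section GraphLaplacian

variable {V : Type*} [Fintype V] {w : V → V → ℝ} {μ : V → ℝ}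

variable (w μ) in
noncomputable def graphLapLinearMap : (V → ℝ) →ₗ[ℝ] V → ℝ where
  toFun := graphLap w μ
  map_add' u v := by
    ext x
    simp only [graphLap, Pi.add_apply]
    rw [← mul_add, ← Finset.sum_add_distrib]
    exact congrArg _ (Finset.sum_congr rfl fun y _ => by ring)
  map_smul' c u := by
    ext x
    simp only [graphLap, Pi.smul_apply, smul_eq_mul, RingHom.id_apply, Finset.mul_sum]
    exact Finset.sum_congr rfl fun y _ => by ring

theorem graphLap_add (u v : V → ℝ) (x : V) :
    graphLap w μ (u + v) x = graphLap w μ u x + graphLap w μ v x :=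
  congrFun ((graphLapLinearMap w μ).map_add u v) x

theorem graphLap_sub (u v : V → ℝ) (x : V) :
    graphLap w μ (u - v) x = graphLap w μ u x - graphLap w μ v x :=
  congrFun ((graphLapLinearMap w μ).map_sub u v) x

theorem graphLap_neg (u : V → ℝ) (x : V) : graphLap w μ (-u) x = -graphLap w μ u x :=
  congrFun ((graphLapLinearMap w μ).map_neg u) x

theorem graphLap_const (c : ℝ) (x : V) : graphLap w μ (fun _ => c) x = 0 := by
  simp [graphLap]

theorem tendsto_graphLap {ι : Type*} {l : Filter ι} {f : ι → V → ℝ} {g : V → ℝ}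
    (hf : ∀ y, Tendsto (fun i => f i y) l (𝓝 (g y))) (x : V) :
    Tendsto (fun i => graphLap w μ (f i) x) l (𝓝 (graphLap w μ g x)) :=
  (tendsto_finsetSum _ fun y _ => ((hf y).sub (hf x)).const_mul _).const_mul _

theorem graphLap_nonpos_of_forall_le {u : V → ℝ} {x : V} (hwnn : ∀ y, 0 ≤ w x y)
    (hμ : 0 ≤ μ x) (hmax : ∀ y, u y ≤ u x) : graphLap w μ u x ≤ 0 :=
  mul_nonpos_of_nonneg_of_nonpos (inv_nonneg.2 hμ) <| Finset.sum_nonpos fun y _ =>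
    mul_nonpos_of_nonneg_of_nonpos (hwnn y) (sub_nonpos.2 (hmax y))

theorem eq_of_forall_le_of_graphLap_nonneg {u : V → ℝ} {x y : V} (hwnn : ∀ y, 0 ≤ w x y)
    (hμ : 0 < μ x) (hmax : ∀ y, u y ≤ u x) (hΔ : 0 ≤ graphLap w μ u x) (hxy : 0 < w x y) :
    u y = u x := by
  have hsum : ∑ z, w x z * (u z - u x) = 0 := by
    have := le_antisymm (graphLap_nonpos_of_forall_le hwnn hμ.le hmax) hΔ
    exact (mul_eq_zero.1 this).resolve_left (inv_ne_zero hμ.ne')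
  have hterm := (Finset.sum_eq_zero_iff_of_nonpos fun z _ =>
    mul_nonpos_of_nonneg_of_nonpos (hwnn z) (sub_nonpos.2 (hmax z))).1 hsum y (Finset.mem_univ y)
  exact sub_eq_zero.1 ((mul_eq_zero.1 hterm).resolve_left hxy.ne')

theorem forall_eq_of_forall_le_of_graphLap_nonneg (hwnn : ∀ x y, 0 ≤ w x y)
    (hμ : ∀ x, 0 < μ x) (hconn : graphConnected w) {u : V → ℝ} {a : V}
    (hmax : ∀ y, u y ≤ u a) (hΔ : ∀ x, u x = u a → 0 ≤ graphLap w μ u x) (x : V) :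
    u x = u a := by
  induction hconn a x with
  | refl => rfl
  | tail _ hbc ih =>
    exact (eq_of_forall_le_of_graphLap_nonneg (hwnn _) (hμ _) (ih ▸ hmax) (hΔ _ ih) hbc).trans ih

theorem le_of_graphLap_sub_mul_le (hwnn : ∀ x y, 0 ≤ w x y) (hμ : ∀ x, 0 < μ x) {k : ℝ}
    (hk : 0 < k) {u v : V → ℝ}
    (h : ∀ x, graphLap w μ v x - k * v x ≤ graphLap w μ u x - k * u x) : u ≤ v := by
  by_contra hne
  simp only [Pi.le_def, not_forall, not_le] at hne
  obtain ⟨z, hz⟩ := hne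
  have : Nonempty V := ⟨z⟩
  obtain ⟨x, hx⟩ := Finite.exists_max (u - v)
  have hΔ := graphLap_nonpos_of_forall_le (hwnn x) (hμ x).le hx
  rw [graphLap_sub] at hΔ
  have := hx z
  simp only [Pi.sub_apply] at this
  nlinarith [h x]

theorem surjective_graphLapLinearMap_sub_smul (hwnn : ∀ x y, 0 ≤ w x y)
    (hμ : ∀ x, 0 < μ x) {k : ℝ} (hk : 0 < k) :
    Function.Surjective (graphLapLinearMap w μ - k • LinearMap.id : (V → ℝ) →ₗ[ℝ] V → ℝ) := by
  refine LinearMap.injective_iff_surjective.1 fun u v huv => ?_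
  have h x : graphLap w μ u x - k * u x = graphLap w μ v x - k * v x := congrFun huv x
  exact le_antisymm (le_of_graphLap_sub_mul_le hwnn hμ hk fun x => (h x).ge)
    (le_of_graphLap_sub_mul_le hwnn hμ hk fun x => (h x).le)

theorem exists_graphLap_eq_of_le_of_le (hwnn : ∀ x y, 0 ≤ w x y) (hμ : ∀ x, 0 < μ x)
    {k : ℝ} (hk : 0 < k) (F : V → ℝ → ℝ) {usub usup : V → ℝ} (hle : usub ≤ usup)
    (hF : ∀ x, AntitoneOn (fun t => F x t - k * t) (Icc (usub x) (usup x)))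
    (hsub : ∀ x, F x (usub x) ≤ graphLap w μ usub x)
    (hsup : ∀ x, graphLap w μ usup x ≤ F x (usup x)) :
    ∃ u : V → ℝ, (∀ x, graphLap w μ u x = F x (u x)) ∧ usub ≤ u ∧ u ≤ usup := by
  have hsurj := surjective_graphLapLinearMap_sub_smul hwnn hμ hk
  set T : (V → ℝ) → V → ℝ := fun u => Function.surjInv hsurj fun x => F x (u x) - k * u x
  have hT u x : graphLap w μ (T u) x - k * T u x = F x (u x) - k * u x :=
    congrFun (Function.surjInv_eq hsurj _) x
  have hTmono {u v : V → ℝ} (hu : usub ≤ u) (huv : u ≤ v) (hv : v ≤ usup) : T u ≤ T v :=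
    le_of_graphLap_sub_mul_le hwnn hμ hk fun x => by
      rw [hT, hT]
      exact hF x ⟨hu x, (huv x).trans (hv x)⟩ ⟨(hu x).trans (huv x), hv x⟩ (huv x)
  have hTsub : usub ≤ T usub := le_of_graphLap_sub_mul_le hwnn hμ hk fun x => by
    rw [hT]; linarith [hsub x]
  have hTsup : T usup ≤ usup := le_of_graphLap_sub_mul_le hwnn hμ hk fun x => by
    rw [hT]; linarith [hsup x]
  -- `T` is monotone on the order interval `[usub, usup]`, which is a complete lattice that `T`
  -- maps into itself, so Knaster–Tarski provides a fixed point.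
  have : Fact (usub ≤ usup) := ⟨hle⟩
  let T' : Icc usub usup →o Icc usub usup :=
    { toFun := fun u => ⟨T u, hTsub.trans (hTmono le_rfl u.2.1 u.2.2),
        (hTmono u.2.1 u.2.2 le_rfl).trans hTsup⟩
      monotone' := fun u v huv => hTmono u.2.1 huv v.2.2 }
  have hfix : T T'.lfp = T'.lfp := congrArg Subtype.val T'.map_lfp
  refine ⟨T'.lfp, fun x => ?_, T'.lfp.2.1, T'.lfp.2.2⟩
  have := hT T'.lfp x
  rw [hfix] at this
  linarith

end GraphLaplacian

section Dirac

variable {V ι : Type*} [DecidableEq V] {μ : V → ℝ}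

theorem dirac_nonneg {p x : V} (hμ : 0 ≤ μ x) : 0 ≤ dirac μ p x := by
  unfold dirac; split_ifs <;> positivity

theorem dirac_le {p x : V} (hμ : 0 ≤ μ x) : dirac μ p x ≤ (μ x)⁻¹ := by
  unfold dirac; split_ifs <;> simp [hμ]

variable [Fintype ι]

theorem sum_dirac_nonneg {x : V} (hμ : 0 ≤ μ x) (p : ι → V) : 0 ≤ ∑ j, dirac μ (p j) x :=
  Finset.sum_nonneg fun _ _ => dirac_nonneg hμ

theorem sum_dirac_le {x : V} {η : ℝ} (hμ : 0 ≤ μ x) (hη : (μ x)⁻¹ ≤ η) (p : ι → V) :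
    ∑ j, dirac μ (p j) x ≤ Fintype.card ι * η := by
  simpa using Finset.sum_le_sum (s := Finset.univ) fun j _ => (dirac_le (p := p j) hμ).trans hη

theorem inv_le_sum_dirac (hμ : ∀ x, 0 ≤ μ x) (p : ι → V) (i : ι) :
    (μ (p i))⁻¹ ≤ ∑ j, dirac μ (p j) (p i) := by
  simpa [dirac] using Finset.single_le_sum (fun j _ => dirac_nonneg (p := p j) (hμ (p i)))
    (Finset.mem_univ i)

theorem sum_mul_sum_dirac_mul [Fintype V] (hμ : ∀ x, μ x ≠ 0) (p : ι → V) (φ : V → ℝ) :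
    ∑ x, μ x * (∑ j, dirac μ (p j) x * φ x) = ∑ j, φ (p j) := by
  simp only [Finset.mul_sum]
  rw [Finset.sum_comm]
  refine Finset.sum_congr rfl fun j _ => ?_
  simp [dirac, ite_mul, mul_ite, ← mul_assoc, mul_inv_cancel₀ (hμ _)]

end Dirac

theorem antitoneOn_mul_exp_mul_exp_sub_one_sub {lam : ℝ} (hlam : 0 ≤ lam) :
    AntitoneOn (fun t => lam * exp t * (exp t - 1) - 2 * lam * t) (Iic 0) := by
  intro a _ b hb hab
  have hb1 : exp b ^ 2 ≤ 1 := pow_le_one₀ (exp_pos b).le (exp_le_one_iff.2 hb)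
  have hexp : exp a ≤ exp b := exp_le_exp.2 hab
  have hconvex : (2 * (a - b) + 1) * exp b ^ 2 ≤ exp a ^ 2 := by
    calc (2 * (a - b) + 1) * exp b ^ 2 ≤ exp (2 * (a - b)) * exp b ^ 2 := by
          gcongr; exact add_one_le_exp _
      _ = exp a ^ 2 := by rw [sq, sq, ← exp_add, ← exp_add, ← exp_add]; ring_nf
  have hinner : exp b ^ 2 - exp a ^ 2 - (exp b - exp a) - 2 * (b - a) ≤ 0 := by
    nlinarith [mul_le_mul_of_nonneg_left hb1 (sub_nonneg.2 hab)]
  simp only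
  nlinarith [mul_nonpos_of_nonneg_of_nonpos hlam hinner]

theorem mul_half_one_add_sqrt_mul_sub_one {lam c : ℝ} (hlam : 0 < lam) (hc : c ≤ lam) :
    lam * ((1 + √(1 - c / lam)) / 2) * ((1 + √(1 - c / lam)) / 2 - 1) = -(c / 4) := by
  have hs := sq_sqrt (sub_nonneg.2 ((div_le_one hlam).2 hc))
  calc _ = lam * (√(1 - c / lam) ^ 2 - 1) / 4 := by ring
    _ = -(c / 4) := by rw [hs]; field_simp; ring

theorem tendsto_log_half_one_add_sqrt_one_sub_div (c : ℝ) :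
    Tendsto (fun lam => log ((1 + √(1 - c / lam)) / 2)) atTop (𝓝 0) := by
  have hcont : ContinuousAt (fun y : ℝ => log ((1 + √(1 - y)) / 2)) 0 :=
    ContinuousAt.log (by fun_prop) (by norm_num)
  simpa [Function.comp_def] using
    hcont.tendsto.comp ((tendsto_const_nhds (x := c)).div_atTop tendsto_id)

section ChernSimons

variable {V : Type*} [Fintype V] {w : V → V → ℝ} {μ : V → ℝ}

def IsChernSimonsSolution (w : V → V → ℝ) (μ u₀ : V → ℝ) (lam c : ℝ) (u : V → ℝ) : Prop :=
  ∀ x, graphLap w μ u x = lam * exp (u₀ x + u x) * (exp (u₀ x + u x) - 1) + c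

theorem graphLap_add_of_isChernSimonsSolution {u₀ u f : V → ℝ} {lam c : ℝ}
    (hu₀ : ∀ x, graphLap w μ u₀ x = -c + f x) (hu : IsChernSimonsSolution w μ u₀ lam c u)
    (x : V) :
    graphLap w μ (u₀ + u) x = lam * exp (u₀ x + u x) * (exp (u₀ x + u x) - 1) + f x := by
  rw [graphLap_add, hu₀, hu]
  ring

theorem lt_zero_of_graphLap_eq (hwnn : ∀ x y, 0 ≤ w x y) (hμ : ∀ x, 0 < μ x)
    (hconn : graphConnected w) {lam : ℝ} (hlam : 0 ≤ lam) {f v : V → ℝ} (hf : ∀ x, 0 ≤ f x) {a : V}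
    (ha : 0 < f a) (hv : ∀ x, graphLap w μ v x = lam * exp (v x) * (exp (v x) - 1) + f x)
    (x : V) : v x < 0 := by
  by_contra! hx
  have : Nonempty V := ⟨a⟩
  obtain ⟨m, hm⟩ := Finite.exists_max v
  have hmax : 0 ≤ lam * exp (v m) * (exp (v m) - 1) :=
    mul_nonneg (mul_nonneg hlam (exp_pos _).le) (sub_nonneg.2 (one_le_exp (hx.trans (hm x))))
  have hconst : ∀ y, v y = v m := forall_eq_of_forall_le_of_graphLap_nonneg hwnn hμ hconn hm
    fun y hy => by rw [hv, hy]; linarith [hf y]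
  have h0 : graphLap w μ v a = 0 := by
    rw [show v = fun _ => v m from funext hconst]
    exact graphLap_const _ _
  rw [hv, hconst a] at h0
  linarith

theorem exists_isChernSimonsSolution_log_le (hwnn : ∀ x y, 0 ≤ w x y) (hμ : ∀ x, 0 < μ x)
    {u₀ f : V → ℝ} {lam c t : ℝ} (hlam : 0 < lam) (ht0 : 0 < t) (ht1 : t ≤ 1) (hf0 : ∀ x, 0 ≤ f x)
    (hf : ∀ x, f x ≤ -(lam * t * (t - 1))) (hu₀ : ∀ x, graphLap w μ u₀ x = -c + f x) :
    ∃ u, IsChernSimonsSolution w μ u₀ lam c u ∧ ∀ x, -u₀ x + log t ≤ u x := by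
  obtain ⟨u, hu, hsub, -⟩ := exists_graphLap_eq_of_le_of_le hwnn hμ (k := 2 * lam)
    (by positivity) (fun x s => lam * exp (u₀ x + s) * (exp (u₀ x + s) - 1) + c)
    (usub := -u₀ + fun _ => log t) (usup := -u₀)
    (fun x => by simpa using log_nonpos ht0.le ht1)
    (fun x a ha b hb hab => by
      have := antitoneOn_mul_exp_mul_exp_sub_one_sub hlam.le
        (show u₀ x + a ∈ Iic 0 by simp only [mem_Iic]; linarith [ha.2, Pi.neg_apply u₀ x])
        (show u₀ x + b ∈ Iic 0 by simp only [mem_Iic]; linarith [hb.2, Pi.neg_apply u₀ x])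
        (by linarith)
      simp only at this ⊢
      linarith)
    (fun x => by
      rw [graphLap_add, graphLap_neg, graphLap_const, hu₀]
      simp only [Pi.add_apply, Pi.neg_apply]
      rw [show u₀ x + (-u₀ x + log t) = log t by ring, exp_log ht0]
      linarith [hf x])
    (fun x => by
      rw [graphLap_neg, hu₀]
      simp only [Pi.neg_apply, add_neg_cancel, exp_zero]
      linarith [hf0 x])
  exact ⟨u, hu, hsub⟩

theorem bounds_of_maximal_isChernSimonsSolution (hwnn : ∀ x y, 0 ≤ w x y)
    (hμ : ∀ x, 0 < μ x) (hconn : graphConnected w) {u₀ f U : V → ℝ} {lam c C : ℝ}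
    (hf0 : ∀ x, 0 ≤ f x) (hfC : ∀ x, f x ≤ C / 4) {a : V} (ha : 0 < f a) (hC : C ≤ lam)
    (hu₀ : ∀ x, graphLap w μ u₀ x = -c + f x) (hU : IsChernSimonsSolution w μ u₀ lam c U)
    (hmax : ∀ u, IsChernSimonsSolution w μ u₀ lam c u → ∀ x, u x ≤ U x) (x : V) :
    -u₀ x + log ((1 + √(1 - C / lam)) / 2) ≤ U x ∧ U x < -u₀ x := by
  have hlam : 0 < lam := by linarith [hfC a]
  have hsqrt : √(1 - C / lam) ≤ 1 :=
    sqrt_le_one.2 (sub_le_self 1 (div_nonneg (by linarith [hf0 a, hfC a]) hlam.le))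
  obtain ⟨u, hu, hle⟩ := exists_isChernSimonsSolution_log_le hwnn hμ hlam
    (t := (1 + √(1 - C / lam)) / 2) (by positivity) (by linarith) hf0
    (fun x => by rw [mul_half_one_add_sqrt_mul_sub_one hlam hC]; linarith [hfC x]) hu₀
  have hneg := lt_zero_of_graphLap_eq hwnn hμ hconn hlam.le hf0 ha
    (graphLap_add_of_isChernSimonsSolution hu₀ hU) x
  exact ⟨(hle x).trans (hmax u hu x), by simp only [Pi.add_apply] at hneg; linarith⟩

theorem tendsto_sum_mul_graphLap_mul {ι : Type*} {l : Filter ι} {v : ι → V → ℝ}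
    (hv : ∀ y, Tendsto (fun i => v i y) l (𝓝 0)) (φ : V → ℝ) :
    Tendsto (fun i => ∑ x, μ x * (graphLap w μ (v i) x * φ x)) l (𝓝 0) := by
  simpa [graphLap_const] using tendsto_finsetSum Finset.univ fun x _ =>
    ((tendsto_graphLap (μ := μ) (w := w) (g := fun _ => 0) hv x).mul_const (φ x)).const_mul (μ x)

end ChernSimons

theorem stmt_19_general {V : Type*} [Fintype V] [DecidableEq V]
    (w : V → V → ℝ) (μ : V → ℝ)
    (hwnn : ∀ x y, 0 ≤ w x y)
    (hμ : ∀ x, 0 < μ x) (hconn : graphConnected w)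
    (N : ℕ) (hN : 0 < N) (p : Fin N → V)
    (η : ℝ) (hη : η = ⨆ x, (μ x)⁻¹)
    (u₀ : V → ℝ)
    (hu₀ : ∀ x, graphLap w μ u₀ x =
      -(4 * π * N) / (∑ y, μ y) + 4 * π * ∑ j, dirac μ (p j) x)
    (lamc : ℝ)
    (U : ℝ → V → ℝ)
    (hsol : ∀ lam > lamc,
      (∀ x, graphLap w μ (U lam) x =
        lam * exp (u₀ x + U lam x) * (exp (u₀ x + U lam x) - 1)
          + 4 * π * N / (∑ y, μ y)) ∧
      ∀ u' : V → ℝ,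
        (∀ x, graphLap w μ u' x =
          lam * exp (u₀ x + u' x) * (exp (u₀ x + u' x) - 1)
            + 4 * π * N / (∑ y, μ y)) →
        ∀ x, u' x ≤ U lam x) :
    (∀ lam, lam > lamc → lam ≥ 16 * π * N * η → ∀ x,
      -u₀ x + Real.log ((1 + Real.sqrt (1 - 16 * π * N * η / lam)) / 2) ≤ U lam x ∧
      U lam x < -u₀ x) ∧
    (∀ x, Tendsto (fun lam => U lam x) atTop (nhds (-u₀ x))) ∧
    (∀ φ : V → ℝ,
      Tendsto (fun lam => ∑ x, μ x *
          (lam * exp (u₀ x + U lam x) * (exp (u₀ x + U lam x) - 1) * φ x))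
        atTop (nhds (-(4 * π * ∑ j, φ (p j))))) := by
  set f : V → ℝ := fun x => 4 * π * ∑ j, dirac μ (p j) x
  have hμη x : (μ x)⁻¹ ≤ η := hη ▸ le_ciSup (f := fun x => (μ x)⁻¹) (finite_range _).bddAbove x
  have hf0 x : 0 ≤ f x := mul_nonneg (by positivity) (sum_dirac_nonneg (hμ x).le p)
  have hfη x : f x ≤ 16 * π * N * η / 4 := by
    have := mul_le_mul_of_nonneg_left (sum_dirac_le (hμ x).le (hμη x) p)
      (by positivity : (0 : ℝ) ≤ 4 * π)
    simp only [Fintype.card_fin] at this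
    simp only [f]
    linarith
  have hfp : 0 < f (p ⟨0, hN⟩) := mul_pos (by positivity)
    ((inv_pos.2 (hμ _)).trans_le (inv_le_sum_dirac (fun x => (hμ x).le) p _))
  have hu₀' x : graphLap w μ u₀ x = -(4 * π * N / ∑ y, μ y) + f x := by rw [hu₀, neg_div]
  have hbounds : ∀ lam, lam > lamc → lam ≥ 16 * π * N * η → ∀ x,
      -u₀ x + log ((1 + √(1 - 16 * π * N * η / lam)) / 2) ≤ U lam x ∧ U lam x < -u₀ x :=
    fun lam hl hlη => bounds_of_maximal_isChernSimonsSolution hwnn hμ hconn hf0 hfη hfp hlη hu₀'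
      (hsol lam hl).1 (hsol lam hl).2
  have hlim x : Tendsto (fun lam => U lam x) atTop (𝓝 (-u₀ x)) := by
    have hlow := (tendsto_log_half_one_add_sqrt_one_sub_div (16 * π * N * η)).const_add (-u₀ x)
    rw [add_zero] at hlow
    have hlarge : ∀ᶠ lam in atTop, lam > lamc ∧ lam ≥ 16 * π * N * η :=
      (eventually_gt_atTop lamc).and (eventually_ge_atTop _)
    exact tendsto_of_tendsto_of_tendsto_of_le_of_le' hlow tendsto_const_nhds
      (hlarge.mono fun lam h => (hbounds lam h.1 h.2 x).1)
      (hlarge.mono fun lam h => (hbounds lam h.1 h.2 x).2.le)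
  refine ⟨hbounds, hlim, fun φ => ?_⟩
  have hΔ := tendsto_sum_mul_graphLap_mul (w := w) (μ := μ) (v := fun lam => u₀ + U lam)
    (fun y => by simpa using (hlim y).const_add (u₀ y)) φ
  have hΔ' := hΔ.sub_const (4 * π * ∑ j, φ (p j))
  rw [zero_sub] at hΔ'
  refine hΔ'.congr' ?_
  filter_upwards [eventually_gt_atTop lamc] with lam hl
  rw [← sum_mul_sum_dirac_mul (fun x => (hμ x).ne') p φ, Finset.mul_sum, ← Finset.sum_sub_distrib]
  refine Finset.sum_congr rfl fun x _ => ?_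
  rw [graphLap_add_of_isChernSimonsSolution hu₀' (hsol lam hl).1, ← Finset.sum_mul]
  ring

/-- Bounds, convergence u_λ → −ū₀, and distributional convergence
λe^{ū₀+u_λ}(e^{ū₀+u_λ}−1) → −4πΣ δ_{p_j} for the maximal solutions of the
shifted Chern-Simons equation. -/
theorem stmt_19 {V : Type*} [Fintype V] [Nonempty V] [DecidableEq V]
    (w : V → V → ℝ) (μ : V → ℝ)
    (hsymm : ∀ x y, w x y = w y x) (hwnn : ∀ x y, 0 ≤ w x y)
    (hμ : ∀ x, 0 < μ x) (hconn : graphConnected w)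
    (N : ℕ) (hN : 0 < N) (p : Fin N → V)
    (η : ℝ) (hη : η = ⨆ x, (μ x)⁻¹)
    (u₀ : V → ℝ)
    (hu₀ : ∀ x, graphLap w μ u₀ x =
      -(4 * π * N) / (∑ y, μ y) + 4 * π * ∑ j, dirac μ (p j) x)
    (lamc : ℝ)
    (U : ℝ → V → ℝ)
    (hsol : ∀ lam > lamc,
      (∀ x, graphLap w μ (U lam) x =
        lam * exp (u₀ x + U lam x) * (exp (u₀ x + U lam x) - 1)
          + 4 * π * N / (∑ y, μ y)) ∧
      ∀ u' : V → ℝ,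
        (∀ x, graphLap w μ u' x =
          lam * exp (u₀ x + u' x) * (exp (u₀ x + u' x) - 1)
            + 4 * π * N / (∑ y, μ y)) →
        ∀ x, u' x ≤ U lam x) :
    (∀ lam, lam > lamc → lam ≥ 16 * π * N * η → ∀ x,
      -u₀ x + Real.log ((1 + Real.sqrt (1 - 16 * π * N * η / lam)) / 2) ≤ U lam x ∧
      U lam x < -u₀ x) ∧
    (∀ x, Tendsto (fun lam => U lam x) atTop (nhds (-u₀ x))) ∧
    (∀ φ : V → ℝ,
      Tendsto (fun lam => ∑ x, μ x *
          (lam * exp (u₀ x + U lam x) * (exp (u₀ x + U lam x) - 1) * φ x))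
        atTop (nhds (-(4 * π * ∑ j, φ (p j))))) :=
  stmt_19_general w μ hwnn hμ hconn N hN p η hη u₀ hu₀ lamc U hsol
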